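/- arXiv:0910.0098 — 11 statements merged into one kernel-verified Lean document; each statement's English description precedes it below -/
import Mathlib

section
/- For any group G, the hypercenter Z*(G) is contained in nil(G) = {x ∈ G : ⟨x,y⟩ is nilpotent for all y ∈ G}, and nil(G) is contained in the set of right Engel elements of G. -/
/-!
If `x ∈ Z_{n+1}(G)`, its image in `G/Z(G)` lies in `Z_n(G/Z(G))`, and `⟨x, y⟩` maps onto the
subgroup generated by the images with kernel central in `⟨x, y⟩`; so by induction on `n`
(starting from the cyclic group `⟨1, y⟩`) every `⟨x, y⟩` is nilpotent. Conversely, in a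
nilpotent group `H` the `k`-fold commutator `[x, g, …, g]` lies in `γ_{k+1}(H)`, which is
trivial for `k` the nilpotency class; apply this inside `H = ⟨x, g⟩`.
-/

def nilizer {G : Type*} [Group G] (x : G) : Set G :=
  {g | Group.IsNilpotent (Subgroup.closure ({x, g} : Set G))}

def nilSet (G : Type*) [Group G] : Set G :=
  {x | ∀ y : G, Group.IsNilpotent (Subgroup.closure ({x, y} : Set G))}

open Group
open Subgroup (closure center)
open scoped commutatorElement

theorem Subgroup.isNilpotent_of_isNilpotent_map {G G' : Type*} [Group G] [Group G']
    {f : G →* G'} (hf : f.ker ≤ center G) (H : Subgroup G) [IsNilpotent (H.map f)] :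
    IsNilpotent H :=
  Subgroup.isNilpotent_of_ker_le_center (f.subgroupMap H) fun a ha =>
    Subgroup.mem_center_iff.mpr fun b => Subtype.ext <|
      Subgroup.mem_center_iff.mp (hf (congrArg Subtype.val ha : f a = 1)) b

theorem isNilpotent_closure_pair_of_mem_upperCentralSeries {G : Type*} [Group G] {n : ℕ}
    {x : G} (hx : x ∈ Subgroup.upperCentralSeries G n) (y : G) :
    IsNilpotent (closure ({x, y} : Set G)) := by
  induction n generalizing G with
  | zero =>
    obtain rfl : x = 1 := hx
    rw [Subgroup.closure_insert_one, ← Subgroup.zpowers_eq_closure]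
    exact ⟨1, Subgroup.upperCentralSeries_one_eq_top_iff.mpr inferInstance⟩
  | succ n ih =>
    rw [← Subgroup.comap_upperCentralSeries_quotient_center] at hx
    have := ih hx (QuotientGroup.mk' (center G) y)
    rw [← Set.image_pair, ← MonoidHom.map_closure] at this
    exact Subgroup.isNilpotent_of_isNilpotent_map (QuotientGroup.ker_mk' (center G)).le _

theorem Subgroup.iterate_commutator_mem_lowerCentralSeries {G : Type*} [Group G] (x g : G)
    (k : ℕ) : (fun y => ⁅y, g⁆)^[k] x ∈ (⊤ : Subgroup G).lowerCentralSeries k := by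
  induction k with
  | zero => exact Subgroup.mem_top x
  | succ k ih =>
    rw [Function.iterate_succ_apply']
    exact Subgroup.commutator_mem_commutator ih (Subgroup.mem_top g)

theorem Group.iterate_commutator_nilpotencyClass_eq_one {G : Type*} [Group G] [IsNilpotent G]
    (x g : G) : (fun y => ⁅y, g⁆)^[nilpotencyClass G] x = 1 := by
  simpa [Subgroup.lowerCentralSeries_nilpotencyClass] using
    Subgroup.iterate_commutator_mem_lowerCentralSeries x g (nilpotencyClass G)

theorem Subgroup.coe_iterate_commutator {G : Type*} [Group G] (H : Subgroup G) (x g : H)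
    (k : ℕ) : (((fun y => ⁅y, g⁆)^[k] x : H) : G) = (fun y => ⁅y, (g : G)⁆)^[k] x :=
  Function.Semiconj.iterate_right (f := ((↑) : H → G)) (fun _ => rfl) k x

theorem stmt0 {G : Type*} [Group G] :
    ((⨆ n : ℕ, upperCentralSeries G n : Subgroup G) : Set G) ⊆ nilSet G ∧
    nilSet G ⊆ {x : G | ∀ g : G, ∃ n : ℕ, (fun y => ⁅y, g⁆)^[n] x = 1} := by
  refine ⟨fun x hx y => ?_, fun x hx g => ?_⟩
  · obtain ⟨n, hn⟩ :=
      (Subgroup.mem_iSup_of_directed (Subgroup.upperCentralSeries_mono G).directed_le).mp hx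
    exact isNilpotent_closure_pair_of_mem_upperCentralSeries hn y
  · let H := closure ({x, g} : Set G)
    have : IsNilpotent H := hx g
    refine ⟨nilpotencyClass H, ?_⟩
    rw [← H.coe_iterate_commutator ⟨x, Subgroup.subset_closure (by simp)⟩
      ⟨g, Subgroup.subset_closure (by simp)⟩, iterate_commutator_nilpotencyClass_eq_one]
    exact H.coe_one
end

section
/- If G is a finite group and K is a normal subgroup of G contained in the hypercenter Z*(G), then for every x ∈ G, the nilpotentizer of xK in G/K equals nil_G(x)/K, i.e., yK ∈ nil_{G/K}(xK) if and only if y' ∈ nil_G(x) for some (equivalently, every) representative y' of yK. -/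
/-! In a finite group the upper central series stabilises, so `K` lies in some `Z_n(G)`, and
`K ∩ H ≤ Z_n(H)` for `H = ⟨x, y⟩`. A group whose quotient by a subgroup of `Z_n` is nilpotent is
itself nilpotent: if `γ_c(H) ≤ Z_n(H)` then `γ_{c+n}(H) = 1`. Since `⟨xK, yK⟩ ≅ H/(H ∩ K)`, it is
nilpotent exactly when `H` is. -/

namespace Subgroup

variable {G Q : Type*} [Group G] [Group Q]

theorem upperCentralSeries_subgroupOf_le (H : Subgroup G) (n : ℕ) :
    (upperCentralSeries G n).subgroupOf H ≤ upperCentralSeries H n := by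
  induction n with
  | zero => simp
  | succ n ih =>
    intro h hh
    rw [mem_subgroupOf, mem_upperCentralSeries_succ_iff] at hh
    rw [mem_upperCentralSeries_succ_iff]
    exact fun z => ih (hh z)

theorem lowerCentralSeries_add_eq_bot_of_le_upperCentralSeries {c n : ℕ}
    (h : (⊤ : Subgroup G).lowerCentralSeries c ≤ upperCentralSeries G n) :
    (⊤ : Subgroup G).lowerCentralSeries (c + n) = ⊥ := by
  induction n generalizing c with
  | zero => exact le_bot_iff.mp h
  | succ n ih =>
    rw [← add_assoc, add_right_comm]
    refine ih ?_
    rw [lowerCentralSeries_succ]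
    exact (commutator_mono h le_rfl).trans (commutator_upperCentralSeries_top_le G n)

theorem exists_upperCentralSeries_eq_iSup [Finite G] :
    ∃ n, upperCentralSeries G n = ⨆ k, upperCentralSeries G k :=
  ⟨_, (WellFoundedGT.iSup_eq_monotonicSequenceLimit ⟨_, upperCentralSeries_mono G⟩).symm⟩

theorem isNilpotent_of_ker_le_upperCentralSeries (f : G →* Q) {n : ℕ}
    (hf : f.ker ≤ upperCentralSeries G n) [Group.IsNilpotent Q] : Group.IsNilpotent G := by
  obtain ⟨c, hc⟩ := nilpotent_iff_lowerCentralSeries.mp ‹Group.IsNilpotent Q›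
  have hker : (⊤ : Subgroup G).lowerCentralSeries c ≤ f.ker := by
    rw [← map_eq_bot_iff, map_lowerCentralSeries, ← le_bot_iff, ← hc]
    exact lowerCentralSeries_mono c le_top
  exact nilpotent_iff_lowerCentralSeries.mpr
    ⟨c + n, lowerCentralSeries_add_eq_bot_of_le_upperCentralSeries (hker.trans hf)⟩

theorem isNilpotent_map_iff_of_ker_le_upperCentralSeries {f : G →* Q} {n : ℕ}
    (hf : f.ker ≤ upperCentralSeries G n) (H : Subgroup G) :
    Group.IsNilpotent (H.map f) ↔ Group.IsNilpotent H := by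
  rw [← MonoidHom.domRestrict_range]
  constructor
  · intro
    refine isNilpotent_of_ker_le_upperCentralSeries (f.domRestrict H).rangeRestrict (n := n) ?_
    rw [MonoidHom.ker_rangeRestrict, MonoidHom.ker_domRestrict]
    exact (subgroupOf_mono H hf).trans (upperCentralSeries_subgroupOf_le H n)
  · intro
    exact Group.nilpotent_of_surjective _ (f.domRestrict H).rangeRestrict_surjective

end Subgroup

theorem map_mem_nilizer_iff_of_ker_le_upperCentralSeries {G Q : Type*} [Group G] [Group Q]
    {f : G →* Q} {n : ℕ} (hf : f.ker ≤ Subgroup.upperCentralSeries G n) (x y : G) :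
    f y ∈ nilizer (f x) ↔ y ∈ nilizer x := by
  have hclosure : Subgroup.closure {f x, f y} = (Subgroup.closure {x, y}).map f := by
    rw [MonoidHom.map_closure, Set.image_pair]
  change Group.IsNilpotent (Subgroup.closure {f x, f y}) ↔
    Group.IsNilpotent (Subgroup.closure {x, y})
  rw [hclosure]
  exact Subgroup.isNilpotent_map_iff_of_ker_le_upperCentralSeries hf _

theorem stmt1 {G : Type*} [Group G] [Finite G] (K : Subgroup G) [K.Normal]
    (hK : K ≤ ⨆ n : ℕ, upperCentralSeries G n) (x y : G) :
    (QuotientGroup.mk y : G ⧸ K) ∈ nilizer (QuotientGroup.mk x : G ⧸ K) ↔ y ∈ nilizer x := by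
  obtain ⟨n, hn⟩ := Subgroup.exists_upperCentralSeries_eq_iSup (G := G)
  refine map_mem_nilizer_iff_of_ker_le_upperCentralSeries (f := QuotientGroup.mk' K) (n := n) ?_ x y
  rw [QuotientGroup.ker_mk', hn]
  exact hK
end

section
/- For a finite group G and a ∈ G, the order of a divides the cardinality of nil_G(a). -/
lemma closure_pair_mul_aux {G : Type*} [Group G] (a g h : G)
    (hh : h ∈ Subgroup.zpowers a) :
    Subgroup.closure ({a, h * g} : Set G) = Subgroup.closure ({a, g} : Set G) := by
  obtain ⟨n, rfl⟩ := hh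
  have ha1 : a ∈ Subgroup.closure ({a, g} : Set G) :=
    Subgroup.subset_closure (Set.mem_insert _ _)
  have hg1 : g ∈ Subgroup.closure ({a, g} : Set G) :=
    Subgroup.subset_closure (Set.mem_insert_of_mem _ rfl)
  have ha2 : a ∈ Subgroup.closure ({a, a ^ n * g} : Set G) :=
    Subgroup.subset_closure (Set.mem_insert _ _)
  have hg2 : a ^ n * g ∈ Subgroup.closure ({a, a ^ n * g} : Set G) :=
    Subgroup.subset_closure (Set.mem_insert_of_mem _ rfl)
  apply le_antisymm <;> rw [Subgroup.closure_le] <;> rintro x (rfl | rfl)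
  · exact ha1
  · exact mul_mem (zpow_mem ha1 n) hg1
  · exact ha2
  · simpa using mul_mem (inv_mem (zpow_mem ha2 n)) hg2

theorem stmt4 {G : Type*} [Group G] [Finite G] (a : G) :
    orderOf a ∣ (nilizer a).ncard := by
  classical
  set H := Subgroup.zpowers a with hH
  set s := nilizer a with hs
  letI : MulAction H s :=
    { smul := fun h g => ⟨(h : G) * (g : G), by
        have hg := g.2
        simp only [hs, nilizer, Set.mem_setOf_eq] at hg ⊢
        rwa [closure_pair_mul_aux a g h h.2]⟩
      one_smul := fun g => Subtype.ext (one_mul _)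
      mul_smul := fun h1 h2 g => Subtype.ext (mul_assoc _ _ _) }
  have hsmul : ∀ (h : H) (g : s), ((h • g : s) : G) = (h : G) * (g : G) := fun _ _ => rfl
  have hstab : ∀ b : s, MulAction.stabilizer H b = ⊥ := by
    intro b
    rw [eq_bot_iff]
    intro h hb
    have : (h : G) * (b : G) = (b : G) := by
      have := congrArg (Subtype.val) (hb : h • b = b)
      rwa [hsmul] at this
    have h1 : (h : G) = 1 := by
      have := mul_right_cancel (this.trans (one_mul (b : G)).symm)
      exact this
    exact Subgroup.mem_bot.mpr (Subtype.ext h1)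
  have horb : ∀ b : s, Nat.card (MulAction.orbit H b) = orderOf a := by
    intro b
    rw [Nat.card_congr (MulAction.orbitEquivQuotientStabilizer H b), hstab b]
    rw [Nat.card_congr (QuotientGroup.quotientBot (G := H)).toEquiv]
    exact Nat.card_zpowers a
  haveI : Fintype G := Fintype.ofFinite G
  haveI : Fintype s := Fintype.ofFinite s
  have key := MulAction.selfEquivSigmaOrbits H s
  rw [← Nat.card_coe_set_eq, Nat.card_eq_fintype_card, Fintype.card_congr key,
    Fintype.card_sigma]
  have : ∀ ω : MulAction.orbitRel.Quotient H s,
      Fintype.card (MulAction.orbit H ω.out) = orderOf a := by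
    intro ω
    rw [← Nat.card_eq_fintype_card]
    exact horb _
  rw [Finset.sum_congr rfl fun ω _ => this ω, Finset.sum_const, smul_eq_mul]
  exact Dvd.intro_left _ rfl
end

section
/- In a finite group G, nil_G(a) is the union of the maximal nilpotent subgroups of G that contain a. -/
section

variable {G : Type*} [Group G]

theorem Subgroup.isNilpotent_of_le {K H : Subgroup G} (hKH : K ≤ H) [Group.IsNilpotent H] :
    Group.IsNilpotent K :=
  Group.nilpotent_of_mulEquiv (Subgroup.subgroupOfEquivOfLe hKH)

theorem mem_nilizer_iff {a g : G} :
    g ∈ nilizer a ↔ ∃ H : Subgroup G, Group.IsNilpotent H ∧ a ∈ H ∧ g ∈ H := by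
  constructor
  · intro hg
    exact ⟨_, hg, Subgroup.subset_closure (by simp), Subgroup.subset_closure (by simp)⟩
  · rintro ⟨H, hH, haH, hgH⟩
    have hle : Subgroup.closure ({a, g} : Set G) ≤ H :=
      (Subgroup.closure_le H).2 (Set.insert_subset haH (Set.singleton_subset_iff.2 hgH))
    exact Subgroup.isNilpotent_of_le hle

end

theorem stmt5 {G : Type*} [Group G] [Finite G] (a : G) :
    nilizer a =
      ⋃ H ∈ {H : Subgroup G |
        Maximal (fun K : Subgroup G => Group.IsNilpotent K) H ∧ a ∈ H}, (H : Set G) := by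
  ext g
  simp only [mem_nilizer_iff, Set.mem_iUnion, Set.mem_ofPred_eq, SetLike.mem_coe, exists_prop]
  constructor
  · rintro ⟨K, hK, haK, hgK⟩
    obtain ⟨H, hKH, hH⟩ :=
      Finite.exists_le_maximal (p := fun L : Subgroup G => Group.IsNilpotent L) hK
    exact ⟨H, ⟨hH, hKH haK⟩, hKH hgK⟩
  · rintro ⟨H, ⟨hH, haH⟩, hgH⟩
    exact ⟨H, hH.prop, haH, hgH⟩
end

section
/- Let p be a prime and G a finite group whose Sylow p-subgroups are abelian. Then for every p-element x of G, nil_G(x) = C_G(x); in particular nil_G(x) is a subgroup of G. -/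
open Subgroup

theorem Subgroup.eq_top_of_forall_exists_sylow_le {G : Type*} [Group G] [Finite G]
    (K : Subgroup G) (h : ∀ (p : ℕ) [Fact p.Prime], ∃ P : Sylow p G, (P : Subgroup G) ≤ K) :
    K = ⊤ := by
  refine index_eq_one.mp (Nat.eq_one_iff_not_exists_prime_dvd.mpr fun p hp hdvd => ?_)
  have := Fact.mk hp
  obtain ⟨P, hPK⟩ := h p
  exact P.not_dvd_index (hdvd.trans (index_dvd_of_le hPK))

theorem Sylow.commute_of_ne {G : Type*} [Group G] [Finite G] [Group.IsNilpotent G]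
    {p q : ℕ} [Fact p.Prime] [Fact q.Prime] (hpq : p ≠ q) (P : Sylow p G) (Q : Sylow q G)
    {a b : G} (ha : a ∈ P) (hb : b ∈ Q) : Commute a b :=
  commute_of_normal_of_disjoint _ _ inferInstance inferInstance
    (IsPGroup.disjoint_of_ne p q hpq _ _ P.isPGroup' Q.isPGroup') a b ha hb

theorem Sylow.commute_of_subgroup {G : Type*} [Group G] [Finite G] {p : ℕ} [Fact p.Prime]
    (hab : ∀ P : Sylow p G, ∀ a ∈ P, ∀ b ∈ P, Commute a b) (H : Subgroup G) :
    ∀ P : Sylow p H, ∀ a ∈ P, ∀ b ∈ P, Commute a b := by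
  intro P a ha b hb
  obtain ⟨Q, hPQ⟩ := (P.isPGroup'.map H.subtype).exists_le_sylow
  exact Subtype.ext <| hab Q a (hPQ ⟨a, ha, rfl⟩) b (hPQ ⟨b, hb, rfl⟩)

theorem Group.IsNilpotent.mem_center_of_orderOf_eq_prime_pow {G : Type*} [Group G] [Finite G]
    [Group.IsNilpotent G] {p : ℕ} [Fact p.Prime]
    (hab : ∀ P : Sylow p G, ∀ a ∈ P, ∀ b ∈ P, Commute a b)
    {x : G} {n : ℕ} (hx : orderOf x = p ^ n) : x ∈ center G := by
  have hpx : IsPGroup p (zpowers x) := IsPGroup.of_card (by rw [Nat.card_zpowers, hx])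
  obtain ⟨P, hxP⟩ := hpx.exists_le_sylow
  have hxP : x ∈ P := hxP (mem_zpowers x)
  suffices centralizer {x} = ⊤ from
    mem_center_iff.mpr fun g => mem_centralizer_singleton_iff.mp (this ▸ mem_top g)
  refine eq_top_of_forall_exists_sylow_le _ fun q _ => ?_
  by_cases hpq : p = q
  · subst hpq
    exact ⟨P, fun g hg => mem_centralizer_singleton_iff.mpr (hab P g hg x hxP)⟩
  · exact ⟨default, fun g hg => mem_centralizer_singleton_iff.mpr
      (Sylow.commute_of_ne hpq P default hxP hg).symm⟩

open scoped IsMulCommutative in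
theorem centralizer_subset_nilizer {G : Type*} [Group G] (x : G) :
    (centralizer {x} : Set G) ⊆ nilizer x := by
  intro g hg
  have hxg := mem_centralizer_singleton_iff.mp hg
  have hcomm : ∀ a ∈ ({x, g} : Set G), ∀ b ∈ ({x, g} : Set G), a * b = b * a := by
    rintro a (rfl | rfl) b (rfl | rfl) <;> simp [hxg]
  have := isMulCommutative_closure hcomm
  exact CommGroup.isNilpotent

theorem stmt6 {G : Type*} [Group G] [Finite G] (p : ℕ) [Fact p.Prime]
    (hab : ∀ P : Sylow p G, ∀ a b : G, a ∈ P → b ∈ P → a * b = b * a)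
    (x : G) (hx : ∃ n : ℕ, orderOf x = p ^ n) :
    nilizer x = (Subgroup.centralizer {x} : Set G) ∧
      ∃ H : Subgroup G, (H : Set G) = nilizer x := by
  obtain ⟨n, hn⟩ := hx
  have nilizer_subset : nilizer x ⊆ centralizer {x} := by
    intro g (hnil : Group.IsNilpotent (closure {x, g}))
    have hxH : x ∈ closure {x, g} := subset_closure (by simp)
    have hgH : g ∈ closure {x, g} := subset_closure (by simp)
    have hcenter := hnil.mem_center_of_orderOf_eq_prime_pow
      (Sylow.commute_of_subgroup (fun P a ha b hb => hab P a b ha hb) _)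
      (x := ⟨x, hxH⟩) (by rw [Subgroup.orderOf_mk, hn])
    exact mem_centralizer_singleton_iff.mpr
      (congrArg Subtype.val (mem_center_iff.mp hcenter ⟨g, hgH⟩))
  have key := nilizer_subset.antisymm (centralizer_subset_nilizer x)
  exact ⟨key, centralizer {x}, key.symm⟩
end

section
/- If G is a group with trivial center such that the centralizer C_G(g) is abelian for every g ∈ G \ {1}, then nil_G(a) = C_G(a) for every nontrivial a ∈ G; in particular nil_G(a) is a subgroup of G for all a ∈ G. -/
section

variable {G : Type*} [Group G]

theorem Group.isNilpotent_of_isMulCommutative (H : Type*) [Group H] [IsMulCommutative H] :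
    Group.IsNilpotent H :=
  ⟨⟨1, Subgroup.upperCentralSeries_one_eq_top_iff.mpr ‹_›⟩⟩

theorem Subgroup.exists_ne_one_forall_commute_of_isNilpotent (H : Subgroup G)
    [Group.IsNilpotent H] (hH : H ≠ ⊥) : ∃ z ∈ H, z ≠ 1 ∧ ∀ x ∈ H, Commute z x := by
  have : Nontrivial H := (Subgroup.nontrivial_iff_ne_bot H).mpr hH
  obtain ⟨z, hz⟩ := Subgroup.ne_bot_iff_exists_ne_one.mp (Group.IsNilpotent.center_ne_bot H)
  refine ⟨z, z.1.2, fun h => hz (Subtype.ext (Subtype.ext h)), fun x hx => ?_⟩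
  exact congrArg Subtype.val (Subgroup.mem_center_iff.mp z.2 ⟨x, hx⟩).symm

theorem mem_nilizer_of_commute {a g : G} (h : Commute a g) : g ∈ nilizer a := by
  have : IsMulCommutative (Subgroup.closure ({a, g} : Set G)) := by
    refine Subgroup.isMulCommutative_closure fun x hx y hy => ?_
    rcases hx with rfl | rfl <;> rcases hy with rfl | rfl
    exacts [rfl, h, h.symm, rfl]
  exact Group.isNilpotent_of_isMulCommutative _

theorem centralizer_subset_nilizer_s7 (a : G) : (Subgroup.centralizer {a} : Set G) ⊆ nilizer a :=
  fun _ hg => mem_nilizer_of_commute (Subgroup.mem_centralizer_singleton_iff.mp hg).symm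

theorem nilizer_one : nilizer (1 : G) = Set.univ :=
  Set.eq_univ_of_forall fun g => mem_nilizer_of_commute (Commute.one_left g)

theorem nilizer_subset_centralizer
    (hac : ∀ g : G, g ≠ 1 → ∀ a b : G,
      a ∈ Subgroup.centralizer {g} → b ∈ Subgroup.centralizer {g} → a * b = b * a)
    {a : G} (ha : a ≠ 1) : nilizer a ⊆ (Subgroup.centralizer {a} : Set G) := by
  intro g (hg : Group.IsNilpotent (Subgroup.closure ({a, g} : Set G)))
  have haH : a ∈ Subgroup.closure ({a, g} : Set G) := Subgroup.subset_closure (by simp)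
  have hgH : g ∈ Subgroup.closure ({a, g} : Set G) := Subgroup.subset_closure (by simp)
  obtain ⟨z, -, hz, hzH⟩ := Subgroup.exists_ne_one_forall_commute_of_isNilpotent _
    (Subgroup.ne_bot_iff_exists_ne_one.mpr ⟨⟨a, haH⟩, fun h => ha (congrArg Subtype.val h)⟩)
  have hza := Subgroup.mem_centralizer_singleton_iff.mpr (hzH a haH).symm
  have hzg := Subgroup.mem_centralizer_singleton_iff.mpr (hzH g hgH).symm
  exact Subgroup.mem_centralizer_singleton_iff.mpr (hac z hz a g hza hzg).symm

end

theorem stmt7_general {G : Type*} [Group G]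
    (hac : ∀ g : G, g ≠ 1 → ∀ a b : G,
      a ∈ Subgroup.centralizer {g} → b ∈ Subgroup.centralizer {g} → a * b = b * a) :
    (∀ a : G, a ≠ 1 → nilizer a = (Subgroup.centralizer {a} : Set G)) ∧
      ∀ a : G, ∃ H : Subgroup G, (H : Set G) = nilizer a := by
  have nilizer_eq (a : G) (ha : a ≠ 1) : nilizer a = (Subgroup.centralizer {a} : Set G) :=
    (nilizer_subset_centralizer hac ha).antisymm (centralizer_subset_nilizer_s7 a)
  refine ⟨nilizer_eq, fun a => ?_⟩
  rcases eq_or_ne a 1 with rfl | ha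
  · exact ⟨⊤, by rw [nilizer_one, Subgroup.coe_top]⟩
  · exact ⟨Subgroup.centralizer {a}, (nilizer_eq a ha).symm⟩

theorem stmt7 {G : Type*} [Group G] (hz : Subgroup.center G = ⊥)
    (hac : ∀ g : G, g ≠ 1 → ∀ a b : G,
      a ∈ Subgroup.centralizer {g} → b ∈ Subgroup.centralizer {g} → a * b = b * a) :
    (∀ a : G, a ≠ 1 → nilizer a = (Subgroup.centralizer {a} : Set G)) ∧
      ∀ a : G, ∃ H : Subgroup G, (H : Set G) = nilizer a :=
  stmt7_general hac
end

section
/- Let G be a group, H a nilpotent subgroup of G such that C_G(x) ≤ H for every nontrivial x ∈ H. Then nil_G(x) = H for every nontrivial x ∈ H. -/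
/-!
If `⟨x, g⟩` is nilpotent, its centre contains some `z ≠ 1`. Then `z` centralizes `x`, so `z ∈ H`
by the centralizer condition, and `g` centralizes `z`, so `g ∈ H` by the same condition applied
to `z`. Conversely, for `g ∈ H` the group `⟨x, g⟩` is a subgroup of the nilpotent group `H`.
-/

namespace Subgroup

variable {G : Type*} [Group G]

theorem isNilpotent_of_le_s8 {K H : Subgroup G} (hKH : K ≤ H) [Group.IsNilpotent H] :
    Group.IsNilpotent K :=
  (Group.isNilpotent_congr (subgroupOfEquivOfLe hKH)).mp inferInstance

theorem exists_ne_one_forall_commute_of_isNilpotent_s8 {K : Subgroup G} [Group.IsNilpotent K]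
    {x : G} (hxK : x ∈ K) (hx : x ≠ 1) : ∃ z ∈ K, z ≠ 1 ∧ ∀ g ∈ K, Commute z g := by
  have : Nontrivial K := ⟨⟨⟨x, hxK⟩, 1, fun h => hx (congrArg Subtype.val h)⟩⟩
  have : Nontrivial (center K) :=
    (nontrivial_iff_ne_bot _).mpr (Group.IsNilpotent.center_ne_bot K)
  obtain ⟨z, hz⟩ := exists_ne (1 : center K)
  refine ⟨z, (z : K).2, fun h => hz (Subtype.ext (Subtype.ext h)), fun g hg => ?_⟩
  exact congrArg Subtype.val (mem_center_iff.mp z.2 ⟨g, hg⟩).symm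

theorem le_of_isNilpotent_of_centralizer_le {H K : Subgroup G}
    (hc : ∀ x ∈ H, x ≠ 1 → centralizer {x} ≤ H) [Group.IsNilpotent K]
    {x : G} (hxH : x ∈ H) (hxK : x ∈ K) (hx : x ≠ 1) : K ≤ H := by
  obtain ⟨z, -, hz, hzK⟩ := exists_ne_one_forall_commute_of_isNilpotent_s8 hxK hx
  have hzH : z ∈ H := hc x hxH hx (mem_centralizer_singleton_iff.mpr (hzK x hxK))
  exact fun g hg => hc z hzH hz (mem_centralizer_singleton_iff.mpr (hzK g hg).symm)

end Subgroup

theorem stmt8 {G : Type*} [Group G] (H : Subgroup G) (hnil : Group.IsNilpotent H)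
    (hc : ∀ x ∈ H, x ≠ 1 → Subgroup.centralizer {x} ≤ H) :
    ∀ x ∈ H, x ≠ 1 → nilizer x = (H : Set G) := by
  intro x hx hx1
  ext g
  have hxK : x ∈ Subgroup.closure ({x, g} : Set G) := Subgroup.subset_closure (by simp)
  have hgK : g ∈ Subgroup.closure ({x, g} : Set G) := Subgroup.subset_closure (by simp)
  constructor
  · intro (hg : Group.IsNilpotent _)
    exact Subgroup.le_of_isNilpotent_of_centralizer_le hc hx hxK hx1 hgK
  · intro hg
    have hle : Subgroup.closure ({x, g} : Set G) ≤ H :=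
      Subgroup.closure_le H |>.mpr (Set.insert_subset hx (Set.singleton_subset_iff.mpr hg))
    exact Subgroup.isNilpotent_of_le_s8 hle
end

section
/- Let G be a group that is not weakly nilpotent. Then the non-nilpotent graph of G contains a triangle, i.e., there exist x, y, z ∈ G, pairwise distinct, such that ⟨x,y⟩, ⟨y,z⟩ and ⟨x,z⟩ are all non-nilpotent; in fact one can take z = xy. -/
namespace Subgroup

variable {G : Type*} [Group G]

theorem closure_pair_mul_right (a b : G) : closure ({a, a * b} : Set G) = closure {a, b} := by
  have ha : a ∈ closure ({a, b} : Set G) := subset_closure (by simp)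
  have hb : b ∈ closure ({a, b} : Set G) := subset_closure (by simp)
  have ha' : a ∈ closure ({a, a * b} : Set G) := subset_closure (by simp)
  have hab : a * b ∈ closure ({a, a * b} : Set G) := subset_closure (by simp)
  refine le_antisymm ?_ ?_ <;> rw [closure_le, Set.insert_subset_iff, Set.singleton_subset_iff]
  · exact ⟨ha, mul_mem ha hb⟩
  · exact ⟨ha', by simpa using mul_mem (inv_mem ha') hab⟩

theorem closure_pair_mul_left (a b : G) : closure ({a * b, b} : Set G) = closure {a, b} := by
  have ha : a ∈ closure ({a, b} : Set G) := subset_closure (by simp)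
  have hb : b ∈ closure ({a, b} : Set G) := subset_closure (by simp)
  have hab : a * b ∈ closure ({a * b, b} : Set G) := subset_closure (by simp)
  have hb' : b ∈ closure ({a * b, b} : Set G) := subset_closure (by simp)
  refine le_antisymm ?_ ?_ <;> rw [closure_le, Set.insert_subset_iff, Set.singleton_subset_iff]
  · exact ⟨mul_mem ha hb, hb⟩
  · exact ⟨by simpa using mul_mem hab (inv_mem hb'), hb'⟩

theorem isNilpotent_closure_pair_of_commute {a b : G} (h : Commute a b) :
    Group.IsNilpotent (closure ({a, b} : Set G)) := by
  have : IsMulCommutative (closure ({a, b} : Set G)) := isMulCommutative_closure <| by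
    simp only [Set.mem_insert_iff, Set.mem_singleton_iff]
    rintro x (rfl | rfl) y (rfl | rfl)
    exacts [rfl, h.eq, h.symm.eq, rfl]
  exact ⟨1, upperCentralSeries_one_eq_top_iff.2 this⟩

end Subgroup

open Subgroup in
theorem stmt11 {G : Type*} [Group G]
    (h : ∃ x y : G, ¬ Group.IsNilpotent (Subgroup.closure ({x, y} : Set G))) :
    ∃ x y : G, x ≠ y ∧ x ≠ x * y ∧ y ≠ x * y ∧
      ¬ Group.IsNilpotent (Subgroup.closure ({x, y} : Set G)) ∧
      ¬ Group.IsNilpotent (Subgroup.closure ({x, x * y} : Set G)) ∧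
      ¬ Group.IsNilpotent (Subgroup.closure ({y, x * y} : Set G)) := by
  obtain ⟨x, y, hxy⟩ := h
  have hcomm : ¬ Commute x y := fun hc => hxy (isNilpotent_closure_pair_of_commute hc)
  refine ⟨x, y, ?_, ?_, ?_, hxy, by rwa [closure_pair_mul_right], ?_⟩
  · rintro rfl
    exact hcomm (Commute.refl x)
  · intro hx
    obtain rfl : y = 1 := by simpa using hx
    exact hcomm (Commute.one_right x)
  · intro hy
    obtain rfl : x = 1 := by simpa using hy
    exact hcomm (Commute.one_left y)
  · rwa [Set.pair_comm, closure_pair_mul_left]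
end

section
/- There is no finite non-nilpotent group G with a non-nilpotent proper subgroup H < G such that |G| - |nil(G)| = |H| - |nil(H)|. -/
/-!
Elements of `nil(G)` lying in `H` lie in `nil(H)`, so `G ∖ nil(G)` contains a copy of
`H ∖ nil(H)`; equal sizes force `G ∖ H ⊆ nil(G)`, and `G ∖ H` generates `G` because `H` is
proper. So it suffices that every `s ∈ nil(G)` normalises every Sylow `p`-subgroup `P`.
Elements of coprime orders commute in a nilpotent group, so the `p'`-part of `s` centralises `P`.
The `p`-part `u` lies in `P`: the conjugates of `u` are `p`-elements of `nil(G)`, hence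
centralise all `p'`-elements, so in the normal closure `W` of `u` every `p'`-element is central.
Then `W / Z(W)` is a `p`-group, `W` is nilpotent and generated by `p`-elements, hence a normal
`p`-subgroup, contained in every Sylow `p`-subgroup.
-/

open Subgroup
open scoped commutatorElement

section

variable {G : Type*} [Group G]

theorem commutatorElement_pow_orderOf_eq_one_of_mem_center {x y : G} (h : ⁅x, y⁆ ∈ center G) :
    ⁅x, y⁆ ^ orderOf y = 1 := by
  have hcomm : Commute ⁅x, y⁆ y := (mem_center_iff.mp h y).symm
  calc ⁅x, y⁆ ^ orderOf y = (⁅x, y⁆ * y) ^ orderOf y := by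
        rw [hcomm.mul_pow, pow_orderOf_eq_one, mul_one]
    _ = 1 := by
        rw [← conj_eq_commutatorElement_mul, ← map_pow, pow_orderOf_eq_one, map_one]

theorem Group.IsNilpotent.commute_of_coprime_orderOf [Group.IsNilpotent G] {x y : G}
    (h : (orderOf x).Coprime (orderOf y)) : Commute x y := by
  refine Group.nilpotent_center_quotient_ind
    (P := fun G _ _ => ∀ x y : G, (orderOf x).Coprime (orderOf y) → Commute x y) G
    (fun _ _ _ _ _ _ => Subsingleton.elim _ _) (fun G _ _ ih x y h => ?_) x y h
  have hc : ⁅x, y⁆ ∈ center G := by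
    rw [← QuotientGroup.eq_one_iff, ← QuotientGroup.mk'_apply, map_commutatorElement,
      commutatorElement_eq_one_iff_commute]
    exact ih _ _ (Nat.Coprime.coprime_dvd_left (orderOf_map_dvd _ x)
      (h.coprime_dvd_right (orderOf_map_dvd _ y)))
  have hcx : ⁅x, y⁆ ^ orderOf x = 1 := by
    rw [← commutatorElement_inv, inv_pow, inv_eq_one]
    exact commutatorElement_pow_orderOf_eq_one_of_mem_center
      (by rwa [← commutatorElement_inv, inv_mem_iff])
  have hcy := commutatorElement_pow_orderOf_eq_one_of_mem_center hc
  rw [← commutatorElement_eq_one_iff_commute, ← orderOf_eq_one_iff, ← Nat.dvd_one, ← h]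
  exact Nat.dvd_gcd (orderOf_dvd_of_pow_eq_one hcx) (orderOf_dvd_of_pow_eq_one hcy)

variable {G' : Type*} [Group G']

theorem isNilpotent_closure_pair_of_injective (f : G →* G') (hf : Function.Injective f)
    {x y : G} (h : Group.IsNilpotent (closure ({f x, f y} : Set G'))) :
    Group.IsNilpotent (closure ({x, y} : Set G)) := by
  rw [← Set.image_pair, ← MonoidHom.map_closure] at h
  exact Group.nilpotent_of_mulEquiv (equivMapOfInjective _ f hf).symm

theorem mem_nilSet_of_injective (f : G →* G') (hf : Function.Injective f) {x : G}
    (hx : f x ∈ nilSet G') : x ∈ nilSet G :=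
  fun y => isNilpotent_closure_pair_of_injective f hf (hx (f y))

theorem conj_mem_nilSet {x : G} (hx : x ∈ nilSet G) (g : G) : g * x * g⁻¹ ∈ nilSet G :=
  mem_nilSet_of_injective (MulAut.conj g⁻¹).toMonoidHom (MulAut.conj g⁻¹).injective
    (by simpa [mul_assoc] using hx)

theorem mem_nilSet_of_mem_zpowers {s u : G} (hs : s ∈ nilSet G) (hu : u ∈ zpowers s) :
    u ∈ nilSet G := by
  intro y
  have hle : closure ({u, y} : Set G) ≤ closure {s, y} := by
    rw [closure_le, Set.insert_subset_iff, Set.singleton_subset_iff]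
    exact ⟨zpowers_le.mpr (subset_closure (by simp)) hu, subset_closure (by simp)⟩
  have := hs y
  exact Group.nilpotent_of_mulEquiv (subgroupOfEquivOfLe hle)

theorem commute_of_mem_nilSet_of_coprime {x y : G} (hx : x ∈ nilSet G)
    (h : (orderOf x).Coprime (orderOf y)) : Commute x y := by
  set K := closure ({x, y} : Set G)
  have := hx y
  have hK : Commute (⟨x, subset_closure (by simp)⟩ : K) ⟨y, subset_closure (by simp)⟩ :=
    Group.IsNilpotent.commute_of_coprime_orderOf (by rwa [orderOf_mk, orderOf_mk])
  exact hK.map K.subtype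

theorem Subgroup.mem_of_pow_mem_of_coprime {K : Subgroup G} {g : G} {a b : ℕ}
    (hab : a.Coprime b) (ha : g ^ a ∈ K) (hb : g ^ b ∈ K) : g ∈ K := by
  have hg : g = (g ^ a) ^ a.gcdA b * (g ^ b) ^ a.gcdB b := by
    rw [← zpow_natCast, ← zpow_natCast, ← zpow_mul, ← zpow_mul, ← zpow_add,
      ← Nat.gcd_eq_gcd_ab, hab.gcd_eq_one, Nat.cast_one, zpow_one]
  rw [hg]
  exact mul_mem (zpow_mem ha _) (zpow_mem hb _)

theorem pow_ordCompl_pow_ordProj_eq_one (p : ℕ) (g : G) :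
    (g ^ ordCompl[p] (orderOf g)) ^ ordProj[p] (orderOf g) = 1 := by
  rw [← pow_mul, mul_comm, Nat.ordProj_mul_ordCompl_eq_self, pow_orderOf_eq_one]

theorem not_dvd_orderOf_pow_ordProj {p : ℕ} (hp : p.Prime) {g : G} (hg : IsOfFinOrder g) :
    ¬ p ∣ orderOf (g ^ ordProj[p] (orderOf g)) := by
  have h : orderOf (g ^ ordProj[p] (orderOf g)) ∣ ordCompl[p] (orderOf g) :=
    orderOf_dvd_of_pow_eq_one (by
      rw [← pow_mul, Nat.ordProj_mul_ordCompl_eq_self, pow_orderOf_eq_one])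
  exact fun hdvd => hp.coprime_iff_not_dvd.mp
    (Nat.coprime_ordCompl hp hg.orderOf_pos.ne') (hdvd.trans h)

theorem coprime_orderOf_of_pow_prime_pow_eq_one {p k : ℕ} (hp : p.Prime) {u v : G}
    (hu : u ^ p ^ k = 1) (hv : ¬ p ∣ orderOf v) : (orderOf u).Coprime (orderOf v) :=
  ((hp.coprime_iff_not_dvd.mpr hv).pow_left k).coprime_dvd_left (orderOf_dvd_of_pow_eq_one hu)

variable [Finite G] {p : ℕ} [hp : Fact p.Prime]

theorem Group.isNilpotent_of_not_dvd_orderOf_mem_center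
    (h : ∀ y : G, ¬ p ∣ orderOf y → y ∈ center G) : Group.IsNilpotent G := by
  refine Group.of_quotient_center_nilpotent (IsPGroup.isNilpotent (p := p) ?_)
  rw [isPGroup_iff_pow_pow_eq_one]
  refine fun q => QuotientGroup.induction_on q fun g => ⟨(orderOf g).factorization p, ?_⟩
  rw [← QuotientGroup.mk_pow, QuotientGroup.eq_one_iff]
  exact h _ (not_dvd_orderOf_pow_ordProj hp.out (isOfFinOrder_of_finite g))

theorem isPGroup_closure_of_isNilpotent {S : Set G} (hS : ∀ s ∈ S, ∃ k, s ^ p ^ k = 1)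
    [Group.IsNilpotent (closure S)] : IsPGroup p (closure S) := by
  obtain ⟨Q⟩ : Nonempty (Sylow p (closure S)) := inferInstance
  have : Unique (Sylow p (closure S)) := Sylow.unique_of_normal Q inferInstance
  refine (Q.isPGroup'.map (closure S).subtype).to_le ((closure_le _).mpr fun s hs => ?_)
  obtain ⟨k, hk⟩ := hS s hs
  have hs' : IsPGroup p (zpowers (⟨s, subset_closure hs⟩ : closure S)) :=
    IsPGroup.of_card_dvd_pow (n := k)
      (by rw [Nat.card_zpowers]; exact orderOf_dvd_of_pow_eq_one (Subtype.ext hk))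
  obtain ⟨R, hR⟩ := hs'.exists_le_sylow
  exact ⟨_, Subsingleton.elim R Q ▸ hR (mem_zpowers _), rfl⟩

theorem mem_sylow_of_mem_nilSet (P : Sylow p G) {u : G} {k : ℕ} (hu : u ∈ nilSet G)
    (hpu : u ^ p ^ k = 1) : u ∈ P := by
  have hgen : ∀ c ∈ Group.conjugatesOfSet {u}, c ∈ nilSet G ∧ c ^ p ^ k = 1 := by
    intro c hc
    obtain ⟨_, rfl, hconj⟩ := Group.mem_conjugatesOfSet_iff.mp hc
    obtain ⟨g, rfl⟩ := isConj_iff.mp hconj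
    exact ⟨conj_mem_nilSet hu g, by rw [conj_pow, hpu, mul_one, mul_inv_cancel]⟩
  have hW : closure (Group.conjugatesOfSet {u}) ≤ centralizer {y | ¬ p ∣ orderOf y} :=
    (closure_le _).mpr fun c hc y hy => (commute_of_mem_nilSet_of_coprime (hgen c hc).1
      (coprime_orderOf_of_pow_prime_pow_eq_one hp.out (hgen c hc).2 hy)).symm.eq
  have : Group.IsNilpotent (closure (Group.conjugatesOfSet {u})) :=
    Group.isNilpotent_of_not_dvd_orderOf_mem_center (p := p) fun y hy =>
      mem_center_iff.mpr fun w =>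
        Subtype.ext (hW w.2 y (by rwa [Set.mem_ofPred_eq, orderOf_coe])).symm
  have : (closure (Group.conjugatesOfSet {u})).Normal := normalClosure_normal
  exact (isPGroup_closure_of_isNilpotent fun c hc => ⟨k, (hgen c hc).2⟩).le_sylow_of_normal P
    (subset_normalClosure rfl)

theorem mem_normalizer_sylow_of_mem_nilSet (P : Sylow p G) {s : G} (hs : s ∈ nilSet G) :
    s ∈ normalizer (P : Set G) := by
  have hpPart : s ^ ordCompl[p] (orderOf s) ∈ P := mem_sylow_of_mem_nilSet P
    (mem_nilSet_of_mem_zpowers hs (npow_mem_zpowers _ _)) (pow_ordCompl_pow_ordProj_eq_one p s)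
  have hp'Part : s ^ ordProj[p] (orderOf s) ∈ centralizer (P : Set G) := by
    refine mem_centralizer_iff.mpr fun x hx => ?_
    obtain ⟨k, hk⟩ := P.isPGroup' ⟨x, hx⟩
    exact (commute_of_mem_nilSet_of_coprime (mem_nilSet_of_mem_zpowers hs (npow_mem_zpowers _ _))
      (coprime_orderOf_of_pow_prime_pow_eq_one hp.out (u := x) (Subtype.ext_iff.mp hk)
        (not_dvd_orderOf_pow_ordProj hp.out (isOfFinOrder_of_finite s))).symm).eq.symm
  exact mem_of_pow_mem_of_coprime
    ((Nat.coprime_ordCompl hp.out (orderOf_pos s).ne').pow_left ((orderOf s).factorization p))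
    (centralizer_le_normalizer _ hp'Part) (le_normalizer hpPart)

omit hp in
theorem isNilpotent_of_closure_nilSet_eq_top (h : closure (nilSet G) = ⊤) :
    Group.IsNilpotent G := by
  refine (Group.isNilpotent_of_finite_tfae.out 3 0).mp ?_
  intro _ _ P
  rw [← normalizer_eq_top_iff, ← top_le_iff, ← h, closure_le]
  exact fun _ hs => mem_normalizer_sylow_of_mem_nilSet P hs

end

namespace Subgroup

variable {G : Type*} [Group G]

theorem closure_compl_eq_top {H : Subgroup G} (hH : H ≠ ⊤) : closure (H : Set G)ᶜ = ⊤ := by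
  obtain ⟨g₀, hg₀⟩ : ∃ g, g ∉ H := by simpa [eq_top_iff'] using hH
  refine eq_top_iff' _ |>.mpr fun g => ?_
  by_cases hg : g ∈ H
  · have hgg₀ : g * g₀ ∉ H := fun h => hg₀ ((H.mul_mem_cancel_left hg).mp h)
    have hg₀' : g₀ ∈ closure (H : Set G)ᶜ := subset_closure hg₀
    simpa using mul_mem (subset_closure hgg₀) (inv_mem hg₀')
  · exact subset_closure hg

theorem compl_subset_nilSet_of_card_sub_eq [Finite G] (H : Subgroup G)
    (h : Nat.card G - (nilSet G).ncard = Nat.card H - (nilSet H).ncard) :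
    (H : Set G)ᶜ ⊆ nilSet G := by
  have hsub : Subtype.val '' (nilSet H)ᶜ ⊆ (nilSet G)ᶜ := by
    rintro _ ⟨x, hx, rfl⟩ hxG
    exact hx (mem_nilSet_of_injective H.subtype H.subtype_injective hxG)
  have hcard : ((nilSet G)ᶜ).ncard ≤ (Subtype.val '' (nilSet H)ᶜ).ncard := by
    rw [Set.ncard_image_of_injective _ Subtype.val_injective, Set.ncard_compl, Set.ncard_compl, h]
  intro g hg
  by_contra hgG
  rw [← Set.mem_compl_iff, ← Set.eq_of_subset_of_ncard_le hsub hcard] at hgG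
  obtain ⟨x, -, rfl⟩ := hgG
  exact hg x.2

end Subgroup

theorem stmt12 :
    ¬ ∃ (G : Type) (_ : Group G) (_ : Finite G) (H : Subgroup G),
      ¬ Group.IsNilpotent G ∧ H ≠ ⊤ ∧ ¬ Group.IsNilpotent H ∧
      Nat.card G - (nilSet G).ncard = Nat.card H - (nilSet H).ncard := by
  rintro ⟨G, _, _, H, hG, hH, -, hcard⟩
  refine hG (isNilpotent_of_closure_nilSet_eq_top (top_le_iff.mp ?_))
  rw [← H.closure_compl_eq_top hH]
  exact closure_mono (H.compl_subset_nilSet_of_card_sub_eq hcard)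
end

section
/- Let G be a finite group in which every element has prime power order, and let x be a nontrivial p-element of G for a prime p. Then nil_G(x) equals the union of all Sylow p-subgroups of G containing x. In particular, if the Sylow p-subgroups of G are abelian, then nil_G(x) = C_G(x) and nil_G(x) is a p-group. -/
/-!
A nilpotent subgroup of `G` containing the nontrivial `p`-element `x` is a `p`-group: in a finite
nilpotent group a `p`-element and a `q`-element with `q ≠ p` commute, so their product has order
`p ^ n * q ^ m`, which is a prime power only when the `q`-element is trivial. Hence `⟨x, g⟩` is
nilpotent exactly when it lies in a Sylow `p`-subgroup, which then contains `x`.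
-/

theorem Nat.pow_eq_one_of_mul_pow_eq_prime_pow {p q r n m k : ℕ} (hp : p.Prime) (hq : q.Prime)
    (hr : r.Prime) (hpq : p ≠ q) (hn : n ≠ 0) (h : p ^ n * q ^ m = r ^ k) : q ^ m = 1 := by
  have hpr : p = r := (Nat.prime_dvd_prime_iff_eq hp hr).mp <|
    hp.dvd_of_dvd_pow (h ▸ (dvd_pow_self p hn).mul_right _)
  subst hpr
  exact (Nat.coprime_pow_primes m k hq hp hpq.symm).eq_one_of_dvd (h ▸ dvd_mul_left _ _)

theorem Group.IsNilpotent.commute_of_orderOf_eq_prime_pow {H : Type*} [Group H] [Finite H]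
    [Group.IsNilpotent H] {p q : ℕ} [Fact p.Prime] [Fact q.Prime] (hpq : p ≠ q) {a b : H}
    {n m : ℕ} (ha : orderOf a = p ^ n) (hb : orderOf b = q ^ m) : Commute a b := by
  obtain ⟨P, hP⟩ := (IsPGroup.of_card ((Nat.card_zpowers a).trans ha)).exists_le_sylow
  obtain ⟨Q, hQ⟩ := (IsPGroup.of_card ((Nat.card_zpowers b).trans hb)).exists_le_sylow
  exact Subgroup.commute_of_normal_of_disjoint _ _ inferInstance inferInstance
    (IsPGroup.disjoint_of_ne p q hpq _ _ P.2 Q.2) a b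
    (hP (Subgroup.mem_zpowers a)) (hQ (Subgroup.mem_zpowers b))

theorem IsPGroup.of_isNilpotent_of_orderOf_eq_prime_pow {H : Type*} [Group H] [Finite H]
    [Group.IsNilpotent H] (hpp : ∀ h : H, ∃ (q m : ℕ), q.Prime ∧ orderOf h = q ^ m)
    {p : ℕ} [hp : Fact p.Prime] {a : H} (ha1 : a ≠ 1) {n : ℕ} (ha : orderOf a = p ^ n) :
    IsPGroup p H := by
  refine IsPGroup.iff_orderOf.mpr fun b => ?_
  obtain ⟨q, m, hq, hb⟩ := hpp b
  by_cases hpq : p = q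
  · exact ⟨m, hpq ▸ hb⟩
  have hn : n ≠ 0 := by
    rintro rfl
    exact ha1 (orderOf_eq_one_iff.mp (by rw [ha, pow_zero]))
  have : Fact q.Prime := ⟨hq⟩
  have hcomm := Group.IsNilpotent.commute_of_orderOf_eq_prime_pow hpq ha hb
  have hcop : (orderOf a).Coprime (orderOf b) :=
    ha ▸ hb ▸ Nat.coprime_pow_primes n m hp.out hq hpq
  obtain ⟨r, k, hr, hrk⟩ := hpp (a * b)
  rw [hcomm.orderOf_mul_eq_mul_orderOf_of_coprime hcop, ha, hb] at hrk
  exact ⟨0, by rw [hb, pow_zero, Nat.pow_eq_one_of_mul_pow_eq_prime_pow hp.out hq hr hpq hn hrk]⟩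

theorem Subgroup.isNilpotent_closure_pair_of_commute_s16 {G : Type*} [Group G] {x g : G}
    (hxg : Commute x g) : Group.IsNilpotent (closure ({x, g} : Set G)) := by
  have : IsMulCommutative (closure ({x, g} : Set G)) := isMulCommutative_closure <| by
    rintro a (rfl | rfl) b (rfl | rfl)
    exacts [rfl, hxg.eq, hxg.symm.eq, rfl]
  exact ⟨1, upperCentralSeries_one_eq_top_iff.mpr this⟩

theorem nilizer_eq_iUnion_sylow {G : Type*} [Group G] [Finite G]
    (hpp : ∀ g : G, ∃ (q m : ℕ), q.Prime ∧ orderOf g = q ^ m)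
    {p : ℕ} [Fact p.Prime] {x : G} (hx1 : x ≠ 1) {n : ℕ} (hx : orderOf x = p ^ n) :
    nilizer x = ⋃ P ∈ {P : Sylow p G | x ∈ P.1}, ((P.1 : Subgroup G) : Set G) := by
  ext g
  simp only [Set.mem_iUnion, Set.mem_ofPred_eq, exists_prop]
  constructor
  · intro (hg : Group.IsNilpotent (Subgroup.closure ({x, g} : Set G)))
    have hxK : x ∈ Subgroup.closure ({x, g} : Set G) := Subgroup.subset_closure (by simp)
    have hgK : g ∈ Subgroup.closure ({x, g} : Set G) := Subgroup.subset_closure (by simp)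
    have hK : IsPGroup p (Subgroup.closure ({x, g} : Set G)) :=
      IsPGroup.of_isNilpotent_of_orderOf_eq_prime_pow
        (fun h => by simpa only [Subgroup.orderOf_coe] using hpp h)
        (a := ⟨x, hxK⟩) (by simpa using hx1) (by rw [Subgroup.orderOf_mk, hx])
    obtain ⟨P, hP⟩ := hK.exists_le_sylow
    exact ⟨P, hP hxK, hP hgK⟩
  · rintro ⟨P, hxP, hgP⟩
    have hle : Subgroup.closure ({x, g} : Set G) ≤ P :=
      (Subgroup.closure_le _).mpr (Set.insert_subset hxP (Set.singleton_subset_iff.mpr hgP))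
    exact (P.2.to_le hle).isNilpotent

theorem stmt16 {G : Type*} [Group G] [Finite G]
    (hpp : ∀ g : G, ∃ (q m : ℕ), q.Prime ∧ orderOf g = q ^ m)
    (p : ℕ) [Fact p.Prime] (x : G) (hx1 : x ≠ 1) (hx : ∃ n : ℕ, orderOf x = p ^ n) :
    (nilizer x = ⋃ P ∈ {P : Sylow p G | x ∈ P.1}, ((P.1 : Subgroup G) : Set G)) ∧
    ((∀ P : Sylow p G, ∀ a b : G, a ∈ P → b ∈ P → a * b = b * a) →
      nilizer x = (Subgroup.centralizer {x} : Set G) ∧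
      ∀ g ∈ nilizer x, ∃ m : ℕ, orderOf g = p ^ m) := by
  obtain ⟨n, hxn⟩ := hx
  have hnil := nilizer_eq_iUnion_sylow hpp hx1 hxn
  refine ⟨hnil, fun hab => ⟨Set.ext fun g => ⟨fun hg => ?_, fun hg => ?_⟩, fun g hg => ?_⟩⟩
  · obtain ⟨P, hxP, hgP⟩ := Set.mem_iUnion₂.mp (hnil ▸ hg)
    exact Subgroup.mem_centralizer_singleton_iff.mpr (hab P g x hgP hxP)
  · exact Subgroup.isNilpotent_closure_pair_of_commute_s16
      (Subgroup.mem_centralizer_singleton_iff.mp hg).symm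
  · obtain ⟨P, -, hgP⟩ := Set.mem_iUnion₂.mp (hnil ▸ hg)
    obtain ⟨m, hm⟩ := IsPGroup.iff_orderOf.mp P.2 ⟨g, hgP⟩
    exact ⟨m, by rwa [Subgroup.orderOf_mk] at hm⟩
end

section
/- Let G be a finite non-nilpotent group such that nil_G(x) is a subgroup of G for every x ∈ G (an n-group). Then the induced subgraph of the non-nilpotent graph on G \ nil(G) is connected of diameter exactly 2; in particular, for any two nonadjacent vertices x, y ∈ G \ nil(G) there exists z with ⟨x,z⟩ and ⟨y,z⟩ both non-nilpotent. -/
/-- The non-nilpotent graph of a group: distinct `x, y` are adjacent iff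
`⟨x, y⟩` is not nilpotent. -/
def nonNilpGraph (G : Type*) [Group G] : SimpleGraph G where
  Adj x y := x ≠ y ∧ ¬ Group.IsNilpotent (Subgroup.closure ({x, y} : Set G))
  symm := by
    constructor
    rintro x y ⟨h1, h2⟩
    exact ⟨h1.symm, by rwa [Set.pair_comm]⟩
  loopless := by constructor; rintro x ⟨h, -⟩; exact h rfl

/-! Two vertices `x, y` outside `nil(G)` always have a common neighbour, since otherwise
`G = nil_G(x) ∪ nil_G(y)` would be a union of two proper subgroups; so the graph is connected
of diameter at most `2`.

The diameter is not `1`: if distinct vertices were always adjacent, each `nil_G(x)` would lie in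
`nil(G) ∪ {x}`. As `nil(G) = ⋂ nil_G(y)` is a subgroup and `x·nil(G) ⊆ nil_G(x)`, this forces
`nil(G) = 1`, and then `x² ∈ nil_G(x)` forces `x² = 1` for every `x`, so `G` would be abelian.

The vertex set is nonempty because a finite group all of whose `2`-generated subgroups are
nilpotent is nilpotent: the product of two `p`-elements lies in the unique Sylow `p`-subgroup of
the nilpotent group they generate, so the `p`-elements form a normal `p`-subgroup.
-/

open Subgroup

theorem Subgroup.exists_notMem_and_notMem_of_ne_top {G : Type*} [Group G] {H K : Subgroup G}
    (hH : H ≠ ⊤) (hK : K ≠ ⊤) : ∃ z, z ∉ H ∧ z ∉ K := by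
  obtain ⟨a, ha⟩ : ∃ a, a ∉ H := by simpa [eq_top_iff'] using hH
  obtain ⟨b, hb⟩ : ∃ b, b ∉ K := by simpa [eq_top_iff'] using hK
  by_cases haK : a ∈ K
  · by_cases hbH : b ∈ H
    · exact ⟨a * b, fun h => ha (by simpa using mul_mem h (inv_mem hbH)),
        fun h => hb (by simpa using mul_mem (inv_mem haK) h)⟩
    · exact ⟨b, hbH, hb⟩
  · exact ⟨a, ha, haK⟩

namespace SimpleGraph

variable {V : Type*} {Γ : SimpleGraph V}

theorem dist_le_two_of_adj_of_adj {u v w : V} (huw : Γ.Adj u w) (hwv : Γ.Adj w v) :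
    Γ.dist u v ≤ 2 :=
  dist_le (.cons huw (.cons hwv .nil))

theorem dist_eq_two_of_adj_of_adj {u v w : V} (hne : u ≠ v) (hadj : ¬ Γ.Adj u v)
    (huw : Γ.Adj u w) (hwv : Γ.Adj w v) : Γ.dist u v = 2 := by
  have h : Γ.edist u v = 2 := edist_eq_two_iff.mpr ⟨hne, hadj, w, huw, hwv.symm⟩
  simp [dist, h]

end SimpleGraph

section PElements

variable {G : Type*} [Group G] {p : ℕ}

theorem IsPGroup.zpowers_of_pow_pow_eq_one {g : G} {k : ℕ} (h : g ^ p ^ k = 1) :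
    IsPGroup p (zpowers g) :=
  IsPGroup.of_card_dvd_pow (Nat.card_zpowers g ▸ orderOf_dvd_of_pow_eq_one h)

theorem Sylow.mem_of_normal_of_pow_pow_eq_one (P : Sylow p G) [P.Normal] {g : G} {k : ℕ}
    (h : g ^ p ^ k = 1) : g ∈ P := by
  have hsup : zpowers g ⊔ P = P :=
    P.is_maximal' ((IsPGroup.zpowers_of_pow_pow_eq_one h).to_sup_of_normal_right P.isPGroup')
      le_sup_right
  exact hsup.le (mem_sup_left (mem_zpowers g))

variable [Finite G] [Fact p.Prime]

theorem exists_pow_pow_mul_eq_one_of_isNilpotent_closure_pair {a b : G}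
    (hab : Group.IsNilpotent (closure ({a, b} : Set G)))
    (ha : ∃ k : ℕ, a ^ p ^ k = 1) (hb : ∃ k : ℕ, b ^ p ^ k = 1) :
    ∃ k : ℕ, (a * b) ^ p ^ k = 1 := by
  obtain ⟨m, ha⟩ := ha
  obtain ⟨n, hb⟩ := hb
  let a' : closure ({a, b} : Set G) := ⟨a, subset_closure (by simp)⟩
  let b' : closure ({a, b} : Set G) := ⟨b, subset_closure (by simp)⟩
  let P : Sylow p (closure ({a, b} : Set G)) := default
  have hab' : a' * b' ∈ P :=
    mul_mem (P.mem_of_normal_of_pow_pow_eq_one (k := m) (Subtype.ext ha))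
      (P.mem_of_normal_of_pow_pow_eq_one (k := n) (Subtype.ext hb))
  obtain ⟨k, hk⟩ := P.isPGroup' ⟨a' * b', hab'⟩
  exact ⟨k, congrArg (fun z : P => ((z : closure ({a, b} : Set G)) : G)) hk⟩

theorem Group.isNilpotent_of_forall_isNilpotent_closure_pair
    (h : ∀ a b : G, Group.IsNilpotent (closure ({a, b} : Set G))) : Group.IsNilpotent G := by
  refine (Group.isNilpotent_of_finite_tfae.out 3 0).mp ?_
  intro p _ P
  let S : Subgroup G :=
    { carrier := {g | ∃ k : ℕ, g ^ p ^ k = 1}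
      mul_mem' := fun ha hb => exists_pow_pow_mul_eq_one_of_isNilpotent_closure_pair (h _ _) ha hb
      one_mem' := ⟨0, one_pow _⟩
      inv_mem' := fun ⟨k, hk⟩ => ⟨k, by rw [inv_pow, hk, inv_one]⟩ }
  have hS : IsPGroup p S := fun ⟨g, k, hk⟩ => ⟨k, Subtype.ext hk⟩
  have hPS : (P : Subgroup G) ≤ S := fun g hg => by
    obtain ⟨k, hk⟩ := P.isPGroup' ⟨g, hg⟩
    exact ⟨k, congrArg Subtype.val hk⟩
  rw [← P.is_maximal' hS hPS]
  exact ⟨fun g ⟨k, hk⟩ c => ⟨k, by rw [conj_pow, hk, mul_one, mul_inv_cancel]⟩⟩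

end PElements

def IsNGroup (G : Type*) [Group G] : Prop :=
  ∀ x : G, ∃ H : Subgroup G, (H : Set G) = nilizer x

section Nilizer

variable {G : Type*} [Group G]

theorem mem_nilizer_comm {x g : G} : g ∈ nilizer x ↔ x ∈ nilizer g := by
  change Group.IsNilpotent (closure ({x, g} : Set G)) ↔
    Group.IsNilpotent (closure ({g, x} : Set G))
  rw [Set.pair_comm]

theorem self_mem_nilizer (x : G) : x ∈ nilizer x := by
  change Group.IsNilpotent (closure ({x, x} : Set G))
  rw [Set.pair_eq_singleton, ← zpowers_eq_closure]
  open scoped IsMulCommutative in infer_instance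

theorem nilSet_subset_nilizer (x : G) : nilSet G ⊆ nilizer x :=
  fun _ hg => mem_nilizer_comm.mpr (hg x)

theorem notMem_nilSet_of_notMem_nilizer {x g : G} (hg : g ∉ nilizer x) : g ∉ nilSet G :=
  fun h => hg (nilSet_subset_nilizer x h)

theorem nonNilpGraph_adj_iff {x y : G} : (nonNilpGraph G).Adj x y ↔ y ∉ nilizer x :=
  ⟨And.right, fun h => ⟨fun hxy => h (hxy ▸ self_mem_nilizer x), h⟩⟩

theorem nilSet_eq_iInter_nilizer : nilSet G = ⋂ x : G, nilizer x := by
  ext g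
  simp only [Set.mem_iInter, ← mem_nilizer_comm]
  rfl

theorem exists_notMem_nilSet [Finite G] (hnn : ¬ Group.IsNilpotent G) :
    ∃ x : G, x ∉ nilSet G := by
  by_contra! h
  exact hnn (Group.isNilpotent_of_forall_isNilpotent_closure_pair h)

namespace IsNGroup

variable (hG : IsNGroup G)
include hG

noncomputable def nilizerSubgroup (x : G) : Subgroup G := (hG x).choose

theorem mem_nilizerSubgroup {x g : G} : g ∈ hG.nilizerSubgroup x ↔ g ∈ nilizer x :=
  Set.ext_iff.mp (hG x).choose_spec g

noncomputable def nilSetSubgroup : Subgroup G := ⨅ x, hG.nilizerSubgroup x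

theorem mem_nilSetSubgroup {g : G} : g ∈ hG.nilSetSubgroup ↔ g ∈ nilSet G := by
  simp [nilSetSubgroup, mem_iInf, hG.mem_nilizerSubgroup, nilSet_eq_iInter_nilizer]

theorem nilizerSubgroup_ne_top {x : G} (hx : x ∉ nilSet G) : hG.nilizerSubgroup x ≠ ⊤ :=
  fun htop => hx fun g => hG.mem_nilizerSubgroup.mp (htop ▸ mem_top g)

theorem exists_notMem_nilizer_and_notMem_nilizer {x y : G} (hx : x ∉ nilSet G)
    (hy : y ∉ nilSet G) : ∃ z : G, z ∉ nilizer x ∧ z ∉ nilizer y := by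
  simpa only [hG.mem_nilizerSubgroup] using
    exists_notMem_and_notMem_of_ne_top (hG.nilizerSubgroup_ne_top hx)
      (hG.nilizerSubgroup_ne_top hy)

theorem exists_common_neighbor (u v : {x : G | x ∉ nilSet G}) :
    ∃ w, ((nonNilpGraph G).induce {x : G | x ∉ nilSet G}).Adj u w ∧
      ((nonNilpGraph G).induce {x : G | x ∉ nilSet G}).Adj w v := by
  obtain ⟨z, hzu, hzv⟩ := hG.exists_notMem_nilizer_and_notMem_nilizer u.2 v.2
  exact ⟨⟨z, notMem_nilSet_of_notMem_nilizer hzu⟩, nonNilpGraph_adj_iff.mpr hzu,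
    (nonNilpGraph_adj_iff.mpr hzv).symm⟩

theorem exists_ne_mem_nilizer_of_not_isNilpotent [Finite G] (hnn : ¬ Group.IsNilpotent G) :
    ∃ x y : G, x ∉ nilSet G ∧ y ∉ nilSet G ∧ x ≠ y ∧ y ∈ nilizer x := by
  by_contra! h
  have hnilizer {x : G} (hx : x ∉ nilSet G) {y : G} (hy : y ∈ nilizer x) :
      y ∈ nilSet G ∨ y = x := by
    by_contra! hy'
    exact h x y hx hy'.1 (Ne.symm hy'.2) hy
  obtain ⟨x₀, hx₀⟩ := exists_notMem_nilSet hnn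
  have hnilSet_trivial {n : G} (hn : n ∈ nilSet G) : n = 1 := by
    have hmem : x₀ * n ∈ hG.nilizerSubgroup x₀ :=
      mul_mem (hG.mem_nilizerSubgroup.mpr (self_mem_nilizer x₀))
        (hG.mem_nilizerSubgroup.mpr (nilSet_subset_nilizer x₀ hn))
    rcases hnilizer hx₀ (hG.mem_nilizerSubgroup.mp hmem) with h | h
    · refine absurd (hG.mem_nilSetSubgroup.mp ?_) hx₀
      simpa using mul_mem (hG.mem_nilSetSubgroup.mpr h) (inv_mem (hG.mem_nilSetSubgroup.mpr hn))
    · simpa using h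
  have horder (g : G) : orderOf g ∣ 2 := by
    refine orderOf_dvd_of_pow_eq_one ?_
    by_cases hg : g ∈ nilSet G
    · rw [hnilSet_trivial hg, one_pow]
    have hmem : g ^ 2 ∈ hG.nilizerSubgroup g :=
      pow_mem (hG.mem_nilizerSubgroup.mpr (self_mem_nilizer g)) 2
    rcases hnilizer hg (hG.mem_nilizerSubgroup.mp hmem) with h | h
    · exact hnilSet_trivial h
    · rw [pow_two, mul_eq_left] at h
      refine absurd ?_ hg
      rw [h]
      exact hG.mem_nilSetSubgroup.mp (one_mem _)
  apply hnn
  have : IsMulCommutative G := ⟨⟨Commute.of_orderOf_dvd_two horder⟩⟩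
  open scoped IsMulCommutative in infer_instance

end IsNGroup

end Nilizer

theorem stmt19 {G : Type*} [Group G] [Finite G] (hnn : ¬ Group.IsNilpotent G)
    (hn : ∀ x : G, ∃ H : Subgroup G, (H : Set G) = nilizer x) :
    ((nonNilpGraph G).induce {x : G | x ∉ nilSet G}).Connected ∧
    (∀ u v : {x : G | x ∉ nilSet G},
      ((nonNilpGraph G).induce {x : G | x ∉ nilSet G}).dist u v ≤ 2) ∧
    (∃ u v : {x : G | x ∉ nilSet G},
      ((nonNilpGraph G).induce {x : G | x ∉ nilSet G}).dist u v = 2) ∧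
    (∀ x y : G, x ∉ nilSet G → y ∉ nilSet G → ¬ (nonNilpGraph G).Adj x y →
      ∃ z : G, ¬ Group.IsNilpotent (Subgroup.closure ({x, z} : Set G)) ∧
        ¬ Group.IsNilpotent (Subgroup.closure ({y, z} : Set G))) := by
  have hG : IsNGroup G := hn
  obtain ⟨x, y, hx, hy, hxy, hnil⟩ := hG.exists_ne_mem_nilizer_of_not_isNilpotent hnn
  have : Nonempty {x : G | x ∉ nilSet G} := ⟨⟨x, hx⟩⟩
  refine ⟨⟨fun u v => ?_⟩, fun u v => ?_, ⟨⟨x, hx⟩, ⟨y, hy⟩, ?_⟩,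
    fun x y hx hy _ => hG.exists_notMem_nilizer_and_notMem_nilizer hx hy⟩
  · obtain ⟨w, huw, hwv⟩ := hG.exists_common_neighbor u v
    exact huw.reachable.trans hwv.reachable
  · obtain ⟨w, huw, hwv⟩ := hG.exists_common_neighbor u v
    exact SimpleGraph.dist_le_two_of_adj_of_adj huw hwv
  · obtain ⟨w, huw, hwv⟩ := hG.exists_common_neighbor ⟨x, hx⟩ ⟨y, hy⟩
    exact SimpleGraph.dist_eq_two_of_adj_of_adj (Subtype.coe_ne_coe.mp hxy)
      (fun h => nonNilpGraph_adj_iff.mp h hnil) huw hwv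
end
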